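/- Let H be a complex Hilbert space. For every A ∈ B_s(H), A^{##} ⊆ A^{cc}. Moreover, if A^# = A^c, then A^{##} = A^{cc}. -/

import Mathlib

noncomputable section

variable {H : Type*} [NormedAddCommGroup H] [InnerProductSpace ℂ H] [CompleteSpace H]

/-- `M^c`: the set of self-adjoint operators commuting with every member of `M`. -/
def CSet (M : Set (selfAdjoint (H →L[ℂ] H))) : Set (selfAdjoint (H →L[ℂ] H)) :=
  {X | ∀ T ∈ M, (X : H →L[ℂ] H) * (T : H →L[ℂ] H) = (T : H →L[ℂ] H) * (X : H →L[ℂ] H)}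

/-- `M^#`: the set of self-adjoint operators quasi-commuting with every member of `M`. -/
def QSet (M : Set (selfAdjoint (H →L[ℂ] H))) : Set (selfAdjoint (H →L[ℂ] H)) :=
  {X | ∀ T ∈ M,
    (X : H →L[ℂ] H) * (T : H →L[ℂ] H) = (T : H →L[ℂ] H) * (X : H →L[ℂ] H) ∨
    (X : H →L[ℂ] H) * (T : H →L[ℂ] H) + (T : H →L[ℂ] H) * (X : H →L[ℂ] H) = 0}

theorem stmt8 (A : selfAdjoint (H →L[ℂ] H)) :
    QSet (QSet {A}) ⊆ CSet (CSet {A}) ∧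
    (QSet {A} = CSet {A} → QSet (QSet {A}) = CSet (CSet {A})) := by
  have hsub : QSet (QSet {A}) ⊆ CSet (CSet {A}) := by
    intro X hX T hT
    have hTA : (T : H →L[ℂ] H) * A = (A : H →L[ℂ] H) * T := hT A rfl
    set T1 : selfAdjoint (H →L[ℂ] H) :=
      ⟨(T : H →L[ℂ] H) + 1, T.2.add (IsSelfAdjoint.one _)⟩ with hT1def
    have hTq : T ∈ QSet {A} := by
      intro S hS
      rw [Set.mem_singleton_iff] at hS; subst hS
      exact Or.inl hTA
    have hT1q : T1 ∈ QSet {A} := by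
      intro S hS
      rw [Set.mem_singleton_iff] at hS; subst hS
      left
      show ((T : H →L[ℂ] H) + 1) * S = (S : H →L[ℂ] H) * ((T : H →L[ℂ] H) + 1)
      rw [add_mul, mul_add, one_mul, mul_one, hTA]
    have h0 := hX T hTq
    have h1 := hX T1 hT1q
    rcases h0 with h0 | h0
    · exact h0
    have hT1v : (T1 : H →L[ℂ] H) = (T : H →L[ℂ] H) + 1 := rfl
    rw [hT1v] at h1
    rcases h1 with h1 | h1
    · rw [mul_add, add_mul, mul_one, one_mul] at h1
      exact add_right_cancel h1
    · rw [mul_add, add_mul, mul_one, one_mul] at h1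
      -- h1 : X*T + X + (T*X + X) = 0, h0 : X*T + T*X = 0
      have h2 : (X : H →L[ℂ] H) + X = 0 := by
        calc (X : H →L[ℂ] H) + X
            = (X : H →L[ℂ] H) * T + (T : H →L[ℂ] H) * X + ((X : H →L[ℂ] H) + X) := by
              rw [h0, zero_add]
          _ = (X : H →L[ℂ] H) * T + X + ((T : H →L[ℂ] H) * X + X) := by abel
          _ = 0 := h1
      have h3 : (2 : ℂ) • (X : H →L[ℂ] H) = 0 := by rw [two_smul]; exact h2
      have hX0 : (X : H →L[ℂ] H) = 0 := by
        rcases smul_eq_zero.mp h3 with h | h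
        · exact absurd h two_ne_zero
        · exact h
      rw [hX0, zero_mul, mul_zero]
  refine ⟨hsub, fun h => Set.Subset.antisymm hsub ?_⟩
  intro X hX
  rw [QSet, h]
  intro T hT
  exact Or.inl (hX T hT)
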